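/- arXiv:quant-ph/0411152 — 5 statements merged into one kernel-verified Lean document; each statement's English description precedes it below -/
import Mathlib

section
/- (First derivative bound for the eigenvector, eigenvalue 0 case.) Let d ≥ 1 and λ > 0. Let H : ℝ → Matrix (Fin d) (Fin d) ℂ be differentiable on [0,1] with each H(s) Hermitian, and let Ψ : ℝ → EuclideanSpace ℂ (Fin d) be differentiable on [0,1] with ‖Ψ(s)‖ = 1, H(s) Ψ(s) = 0, and ⟨Ψ'(s), Ψ(s)⟩ = 0 for all s ∈ [0,1]. Assume that for every s ∈ [0,1] the kernel of H(s) is spanned by Ψ(s) and every nonzero eigenvalue μ of H(s) satisfies |μ| ≥ λ. Then for every s ∈ [0,1], ‖Ψ'(s)‖ ≤ ‖H'(s)‖ / λ. -/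
/-!
Differentiating `H Ψ = 0` gives `H Ψ' = -H' Ψ`, hence `‖H Ψ'‖ ≤ ‖H'‖` since `‖Ψ‖ = 1`.
The phase condition `⟪Ψ', Ψ⟫ = 0` together with `ker H = span Ψ` puts `Ψ'` in the orthogonal
complement of `ker H`. Expanding in an orthonormal eigenbasis of the Hermitian `H`, only
eigenvectors with nonzero eigenvalue contribute on that complement, and each of these
eigenvalues has modulus at least `λ`; so `λ ‖Ψ'‖ ≤ ‖H Ψ'‖`.
-/

open scoped InnerProductSpace

/-- The continuous linear map on Euclidean space associated to a matrix;
its operator norm is the operator norm induced by the Euclidean norm. -/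
noncomputable def opCLM {d : ℕ} (A : Matrix (Fin d) (Fin d) ℂ) :
    EuclideanSpace ℂ (Fin d) →L[ℂ] EuclideanSpace ℂ (Fin d) :=
  Matrix.toEuclideanCLM (𝕜 := ℂ) A

open Module End

theorem LinearMap.IsSymmetric.mul_norm_le_norm_apply_of_mem_orthogonal_ker
    {𝕜 E : Type*} [RCLike 𝕜] [NormedAddCommGroup E] [InnerProductSpace 𝕜 E]
    [FiniteDimensional 𝕜 E] {T : E →ₗ[𝕜] E} (hT : T.IsSymmetric) {lam : ℝ} (hlam : 0 ≤ lam)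
    (hgap : ∀ μ : 𝕜, HasEigenvalue T μ → μ ≠ 0 → lam ≤ ‖μ‖) {v : E}
    (hv : v ∈ (LinearMap.ker T)ᗮ) : lam * ‖v‖ ≤ ‖T v‖ := by
  let b := hT.eigenvectorBasis rfl
  have hcoord (i : Fin (finrank 𝕜 E)) : lam * ‖b.repr v i‖ ≤ ‖b.repr (T v) i‖ := by
    rw [show b.repr (T v) i = _ from hT.eigenvectorBasis_apply_self_apply rfl v i, norm_mul]
    by_cases hμ : (hT.eigenvalues rfl i : 𝕜) = 0
    · have hb : b i ∈ LinearMap.ker T := by simp [b, hμ]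
      have hvi : b.repr v i = 0 := by
        rw [b.repr_apply_apply]
        exact Submodule.inner_right_of_mem_orthogonal hb hv
      rw [hvi, norm_zero, mul_zero]
      positivity
    · gcongr
      exact hgap _ (hT.hasEigenvalue_eigenvalues rfl i) hμ
  have hsq : (lam * ‖v‖) ^ 2 ≤ ‖T v‖ ^ 2 := by
    rw [mul_pow, ← b.repr.norm_map v, ← b.repr.norm_map (T v), EuclideanSpace.norm_sq_eq,
      EuclideanSpace.norm_sq_eq, Finset.mul_sum]
    gcongr with i
    rw [← mul_pow]
    exact pow_le_pow_left₀ (by positivity) (hcoord i) 2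
  exact (pow_le_pow_iff_left₀ (by positivity) (norm_nonneg _) two_ne_zero).mp hsq

theorem HasDerivAt.clm_apply_of_isScalarTower {𝕜 E F : Type*} [NontriviallyNormedField 𝕜]
    [NormedAlgebra ℝ 𝕜] [NormedAddCommGroup E] [NormedSpace 𝕜 E] [NormedSpace ℝ E]
    [IsScalarTower ℝ 𝕜 E] [NormedAddCommGroup F] [NormedSpace 𝕜 F] [NormedSpace ℝ F]
    [IsScalarTower ℝ 𝕜 F] {A : ℝ → E →L[𝕜] F} {A' : E →L[𝕜] F} {x : ℝ → E} {x' : E} {t : ℝ}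
    (hA : HasDerivAt A A' t) (hx : HasDerivAt x x' t) :
    HasDerivAt (fun u => A u (x u)) (A' (x t) + A t x') t :=
  ((ContinuousLinearMap.restrictScalarsL 𝕜 E F ℝ ℝ).hasFDerivAt.comp_hasDerivAt t hA).clm_apply hx

theorem isSymmetric_opCLM {d : ℕ} {A : Matrix (Fin d) (Fin d) ℂ} (hA : A.IsHermitian) :
    (opCLM A).toLinearMap.IsSymmetric :=
  Matrix.isSymmetric_toEuclideanLin_iff.mpr hA

theorem eigenvector_first_deriv_bound_general {d : ℕ} (lam : ℝ) (hlam : 0 < lam)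
    (H H' : ℝ → Matrix (Fin d) (Fin d) ℂ)
    (hHd : ∀ s ∈ Set.Icc (0:ℝ) 1, HasDerivAt (fun t => opCLM (H t)) (opCLM (H' s)) s)
    (hherm : ∀ s ∈ Set.Icc (0:ℝ) 1, (H s).IsHermitian)
    (Ψ Ψ' : ℝ → EuclideanSpace ℂ (Fin d))
    (hΨd : ∀ s ∈ Set.Icc (0:ℝ) 1, HasDerivAt Ψ (Ψ' s) s)
    (hΨnorm : ∀ s ∈ Set.Icc (0:ℝ) 1, ‖Ψ s‖ = 1)
    (heig : ∀ s ∈ Set.Icc (0:ℝ) 1, opCLM (H s) (Ψ s) = 0)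
    (hphase : ∀ s ∈ Set.Icc (0:ℝ) 1, ⟪Ψ' s, Ψ s⟫_ℂ = 0)
    (hker : ∀ s ∈ Set.Icc (0:ℝ) 1, ∀ v : EuclideanSpace ℂ (Fin d),
      opCLM (H s) v = 0 → ∃ c : ℂ, v = c • Ψ s)
    (hgap : ∀ s ∈ Set.Icc (0:ℝ) 1, ∀ (μ : ℂ) (v : EuclideanSpace ℂ (Fin d)), v ≠ 0 →
      opCLM (H s) v = μ • v → μ ≠ 0 → lam ≤ ‖μ‖) :
    ∀ s ∈ Set.Icc (0:ℝ) 1, ‖Ψ' s‖ ≤ ‖opCLM (H' s)‖ / lam := by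
  intro s hs
  have hderiv : opCLM (H' s) (Ψ s) + opCLM (H s) (Ψ' s) = 0 :=
    (uniqueDiffOn_Icc_zero_one s hs).eq_deriv _
      ((hHd s hs).clm_apply_of_isScalarTower (hΨd s hs)).hasDerivWithinAt
      ((hasDerivWithinAt_const s _ 0).congr heig (heig s hs))
  have horth : Ψ' s ∈ (LinearMap.ker (opCLM (H s)).toLinearMap)ᗮ := by
    refine (Submodule.mem_orthogonal _ _).mpr fun w hw => ?_
    obtain ⟨c, rfl⟩ := hker s hs w hw
    rw [inner_smul_left, inner_eq_zero_symm.mp (hphase s hs), mul_zero]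
  have hgap' (μ : ℂ) (hμ : HasEigenvalue (opCLM (H s)).toLinearMap μ) (hμ0 : μ ≠ 0) :
      lam ≤ ‖μ‖ := by
    obtain ⟨w, hw, hw0⟩ := hμ.exists_hasEigenvector
    exact hgap s hs μ w hw0 (mem_eigenspace_iff.mp hw) hμ0
  rw [le_div_iff₀ hlam, mul_comm]
  calc lam * ‖Ψ' s‖
      ≤ ‖opCLM (H s) (Ψ' s)‖ :=
        (isSymmetric_opCLM (hherm s hs)).mul_norm_le_norm_apply_of_mem_orthogonal_ker
          hlam.le hgap' horth
    _ = ‖opCLM (H' s) (Ψ s)‖ := by rw [eq_neg_of_add_eq_zero_right hderiv, norm_neg]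
    _ ≤ ‖opCLM (H' s)‖ := by simpa [hΨnorm s hs] using (opCLM (H' s)).le_opNorm (Ψ s)

/-- **First derivative bound for the eigenvector, eigenvalue 0 case.** -/
theorem eigenvector_first_deriv_bound {d : ℕ} (hd : 1 ≤ d) (lam : ℝ) (hlam : 0 < lam)
    (H H' : ℝ → Matrix (Fin d) (Fin d) ℂ)
    (hHd : ∀ s ∈ Set.Icc (0:ℝ) 1, HasDerivAt (fun t => opCLM (H t)) (opCLM (H' s)) s)
    (hherm : ∀ s ∈ Set.Icc (0:ℝ) 1, (H s).IsHermitian)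
    (Ψ Ψ' : ℝ → EuclideanSpace ℂ (Fin d))
    (hΨd : ∀ s ∈ Set.Icc (0:ℝ) 1, HasDerivAt Ψ (Ψ' s) s)
    (hΨnorm : ∀ s ∈ Set.Icc (0:ℝ) 1, ‖Ψ s‖ = 1)
    (heig : ∀ s ∈ Set.Icc (0:ℝ) 1, opCLM (H s) (Ψ s) = 0)
    (hphase : ∀ s ∈ Set.Icc (0:ℝ) 1, ⟪Ψ' s, Ψ s⟫_ℂ = 0)
    (hker : ∀ s ∈ Set.Icc (0:ℝ) 1, ∀ v : EuclideanSpace ℂ (Fin d),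
      opCLM (H s) v = 0 → ∃ c : ℂ, v = c • Ψ s)
    (hgap : ∀ s ∈ Set.Icc (0:ℝ) 1, ∀ (μ : ℂ) (v : EuclideanSpace ℂ (Fin d)), v ≠ 0 →
      opCLM (H s) v = μ • v → μ ≠ 0 → lam ≤ ‖μ‖) :
    ∀ s ∈ Set.Icc (0:ℝ) 1, ‖Ψ' s‖ ≤ ‖opCLM (H' s)‖ / lam :=
  eigenvector_first_deriv_bound_general lam hlam H H' hHd hherm Ψ Ψ' hΨd hΨnorm heig hphase hker
    hgap
end

section
/- (Hellmann–Feynman formula for the eigenvalue derivative.) Let d ≥ 1. Let H : ℝ → Matrix (Fin d) (Fin d) ℂ be differentiable on [0,1] with each H(s) Hermitian, let Ψ : ℝ → EuclideanSpace ℂ (Fin d) be differentiable on [0,1] with ‖Ψ(s)‖ = 1, and let γ : ℝ → ℝ be differentiable on [0,1], such that H(s) Ψ(s) = γ(s) Ψ(s) for all s ∈ [0,1]. Then for every s ∈ [0,1], γ'(s) = ⟨Ψ(s), H'(s) Ψ(s)⟩ (this inner product is real). -/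
open scoped InnerProductSpace

lemma opCLM_symm {d : ℕ} {A : Matrix (Fin d) (Fin d) ℂ} (hA : A.IsHermitian)
    (x y : EuclideanSpace ℂ (Fin d)) :
    ⟪opCLM A x, y⟫_ℂ = ⟪x, opCLM A y⟫_ℂ := by
  have h := Matrix.isHermitian_iff_isSymmetric.1 hA
  have hx : opCLM A x = A.toEuclideanLin x := by
    rw [opCLM, ← Matrix.coe_toEuclideanCLM_eq_toEuclideanLin]; rfl
  have hy : opCLM A y = A.toEuclideanLin y := by
    rw [opCLM, ← Matrix.coe_toEuclideanCLM_eq_toEuclideanLin]; rfl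
  rw [hx, hy]; exact h x y

/-- **Hellmann–Feynman formula for the eigenvalue derivative.** -/
theorem hellmann_feynman {d : ℕ} (hd : 1 ≤ d)
    (H H' : ℝ → Matrix (Fin d) (Fin d) ℂ)
    (hHd : ∀ s ∈ Set.Icc (0:ℝ) 1, HasDerivAt (fun t => opCLM (H t)) (opCLM (H' s)) s)
    (hherm : ∀ s ∈ Set.Icc (0:ℝ) 1, (H s).IsHermitian)
    (Ψ Ψ' : ℝ → EuclideanSpace ℂ (Fin d))
    (hΨd : ∀ s ∈ Set.Icc (0:ℝ) 1, HasDerivAt Ψ (Ψ' s) s)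
    (hΨnorm : ∀ s ∈ Set.Icc (0:ℝ) 1, ‖Ψ s‖ = 1)
    (γ γ' : ℝ → ℝ)
    (hγd : ∀ s ∈ Set.Icc (0:ℝ) 1, HasDerivAt γ (γ' s) s)
    (heig : ∀ s ∈ Set.Icc (0:ℝ) 1, opCLM (H s) (Ψ s) = (γ s : ℂ) • Ψ s) :
    ∀ s ∈ Set.Icc (0:ℝ) 1, (γ' s : ℂ) = ⟪Ψ s, opCLM (H' s) (Ψ s)⟫_ℂ := by
  intro s hs
  have hud : UniqueDiffWithinAt ℝ (Set.Icc (0:ℝ) 1) s :=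
    (uniqueDiffOn_Icc zero_lt_one) s hs
  -- derivative of ⟪Ψ, Ψ⟫ is zero within Icc
  have hnn : HasDerivAt (fun t => ⟪Ψ t, Ψ t⟫_ℂ)
      (⟪Ψ s, Ψ' s⟫_ℂ + ⟪Ψ' s, Ψ s⟫_ℂ) s :=
    (hΨd s hs).inner ℂ (hΨd s hs)
  have hone : HasDerivWithinAt (fun _ : ℝ => (1:ℂ))
      (⟪Ψ s, Ψ' s⟫_ℂ + ⟪Ψ' s, Ψ s⟫_ℂ) (Set.Icc (0:ℝ) 1) s := by
    refine (hnn.hasDerivWithinAt).congr (fun t ht => ?_) ?_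
    · rw [inner_self_eq_norm_sq_to_K, hΨnorm t ht]; norm_num
    · rw [inner_self_eq_norm_sq_to_K, hΨnorm s hs]; norm_num
  have hN : ⟪Ψ s, Ψ' s⟫_ℂ + ⟪Ψ' s, Ψ s⟫_ℂ = 0 := by
    have h0 : HasDerivWithinAt (fun _ : ℝ => (1:ℂ)) 0 (Set.Icc (0:ℝ) 1) s :=
      (hasDerivAt_const s (1:ℂ)).hasDerivWithinAt
    rw [← hone.derivWithin hud, h0.derivWithin hud]
  -- derivative of the expectation value
  have hHr : HasDerivAt (fun t => (opCLM (H t)).restrictScalars ℝ)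
      ((opCLM (H' s)).restrictScalars ℝ) s :=
    (ContinuousLinearMap.restrictScalarsL ℂ (EuclideanSpace ℂ (Fin d))
      (EuclideanSpace ℂ (Fin d)) ℝ ℝ).hasFDerivAt.comp_hasDerivAt s (hHd s hs)
  have hB : HasDerivAt (fun t => opCLM (H t) (Ψ t))
      (opCLM (H' s) (Ψ s) + opCLM (H s) (Ψ' s)) s :=
    hHr.clm_apply (hΨd s hs)
  have hf : HasDerivAt (fun t => ⟪Ψ t, opCLM (H t) (Ψ t)⟫_ℂ)
      (⟪Ψ s, opCLM (H' s) (Ψ s) + opCLM (H s) (Ψ' s)⟫_ℂ + ⟪Ψ' s, opCLM (H s) (Ψ s)⟫_ℂ) s :=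
    (hΨd s hs).inner ℂ hB
  -- the expectation value equals γ on Icc
  have hγC : HasDerivWithinAt (fun t => (γ t : ℂ)) (γ' s : ℂ) (Set.Icc (0:ℝ) 1) s :=
    ((hγd s hs).ofReal_comp).hasDerivWithinAt
  have heqOn : ∀ t ∈ Set.Icc (0:ℝ) 1, (γ t : ℂ) = ⟪Ψ t, opCLM (H t) (Ψ t)⟫_ℂ := by
    intro t ht
    rw [heig t ht, inner_smul_right, inner_self_eq_norm_sq_to_K, hΨnorm t ht]
    norm_num
  have hγC' : HasDerivWithinAt (fun t => (γ t : ℂ))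
      (⟪Ψ s, opCLM (H' s) (Ψ s) + opCLM (H s) (Ψ' s)⟫_ℂ + ⟪Ψ' s, opCLM (H s) (Ψ s)⟫_ℂ)
      (Set.Icc (0:ℝ) 1) s :=
    (hf.hasDerivWithinAt).congr heqOn (heqOn s hs)
  have hkey : (γ' s : ℂ)
      = ⟪Ψ s, opCLM (H' s) (Ψ s) + opCLM (H s) (Ψ' s)⟫_ℂ + ⟪Ψ' s, opCLM (H s) (Ψ s)⟫_ℂ := by
    rw [← hγC.derivWithin hud, hγC'.derivWithin hud]
  rw [hkey, inner_add_right]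
  have h1 : ⟪Ψ s, opCLM (H s) (Ψ' s)⟫_ℂ = (γ s : ℂ) * ⟪Ψ s, Ψ' s⟫_ℂ := by
    rw [← opCLM_symm (hherm s hs), heig s hs, inner_smul_left]
    simp
  have h2 : ⟪Ψ' s, opCLM (H s) (Ψ s)⟫_ℂ = (γ s : ℂ) * ⟪Ψ' s, Ψ s⟫_ℂ := by
    rw [heig s hs, inner_smul_right]
  rw [h1, h2]
  rw [add_assoc, ← mul_add, hN, mul_zero, add_zero]
end

section
/- (Second derivative formula for the eigenvalue.) Let d ≥ 1. Let H : ℝ → Matrix (Fin d) (Fin d) ℂ be twice differentiable on [0,1] with each H(s) Hermitian, let Ψ : ℝ → EuclideanSpace ℂ (Fin d) be twice differentiable on [0,1] with ‖Ψ(s)‖ = 1, and let γ : ℝ → ℝ be twice differentiable on [0,1], such that H(s) Ψ(s) = γ(s) Ψ(s) for all s ∈ [0,1]. Then for every s ∈ [0,1], γ''(s) = ⟨Ψ(s), H''(s) Ψ(s)⟩ + 2 Re ⟨Ψ(s), H'(s) Ψ'(s)⟩. -/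
set_option maxHeartbeats 1000000


open scoped InnerProductSpace

/-- Uniqueness of derivatives for functions agreeing on `[0,1]`. -/
lemma derivIccUnique {F : Type*} [NormedAddCommGroup F] [NormedSpace ℝ F]
    {f g : ℝ → F} {a b : F} {s : ℝ} (hs : s ∈ Set.Icc (0:ℝ) 1)
    (hf : HasDerivAt f a s) (hg : HasDerivAt g b s)
    (h : ∀ t ∈ Set.Icc (0:ℝ) 1, f t = g t) : a = b := by
  have h1 : HasDerivWithinAt f a (Set.Icc (0:ℝ) 1) s := hf.hasDerivWithinAt
  have h2 : HasDerivWithinAt f b (Set.Icc (0:ℝ) 1) s :=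
    (hg.hasDerivWithinAt).congr (fun t ht => h t ht) (h s hs)
  exact (uniqueDiffOn_Icc one_pos s hs).eq_deriv _ h1 h2


/-- Product rule for a `ℂ`-linear-map-valued function of a real variable. -/
lemma hasDerivAt_clm_apply_complex {E F : Type*} [NormedAddCommGroup E] [NormedSpace ℂ E]
    [NormedAddCommGroup F] [NormedSpace ℂ F]
    {B : ℝ → E →L[ℂ] F} {B' : E →L[ℂ] F} {u : ℝ → E} {u' : E} {x : ℝ}
    (hB : HasDerivAt B B' x) (hu : HasDerivAt u u' x) :
    HasDerivAt (fun y => B y (u y)) (B' (u x) + B x u') x := by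
  have h1 : HasDerivAt (fun y => (B y).restrictScalars ℝ) (B'.restrictScalars ℝ) x :=
    (ContinuousLinearMap.restrictScalarsL ℂ E F ℝ ℝ).hasFDerivAt.comp_hasDerivAt x hB
  exact h1.clm_apply hu

/-- **Second derivative formula for the eigenvalue.** -/
theorem eigenvalue_second_deriv_formula {d : ℕ} (hd : 1 ≤ d)
    (H H' H'' : ℝ → Matrix (Fin d) (Fin d) ℂ)
    (hHd1 : ∀ s ∈ Set.Icc (0:ℝ) 1, HasDerivAt (fun t => opCLM (H t)) (opCLM (H' s)) s)
    (hHd2 : ∀ s ∈ Set.Icc (0:ℝ) 1, HasDerivAt (fun t => opCLM (H' t)) (opCLM (H'' s)) s)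
    (hherm : ∀ s ∈ Set.Icc (0:ℝ) 1, (H s).IsHermitian)
    (Ψ Ψ' Ψ'' : ℝ → EuclideanSpace ℂ (Fin d))
    (hΨd1 : ∀ s ∈ Set.Icc (0:ℝ) 1, HasDerivAt Ψ (Ψ' s) s)
    (hΨd2 : ∀ s ∈ Set.Icc (0:ℝ) 1, HasDerivAt Ψ' (Ψ'' s) s)
    (hΨnorm : ∀ s ∈ Set.Icc (0:ℝ) 1, ‖Ψ s‖ = 1)
    (γ γ' γ'' : ℝ → ℝ)
    (hγd1 : ∀ s ∈ Set.Icc (0:ℝ) 1, HasDerivAt γ (γ' s) s)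
    (hγd2 : ∀ s ∈ Set.Icc (0:ℝ) 1, HasDerivAt γ' (γ'' s) s)
    (heig : ∀ s ∈ Set.Icc (0:ℝ) 1, opCLM (H s) (Ψ s) = (γ s : ℂ) • Ψ s) :
    ∀ s ∈ Set.Icc (0:ℝ) 1,
      (γ'' s : ℂ) = ⟪Ψ s, opCLM (H'' s) (Ψ s)⟫_ℂ
        + 2 * ((⟪Ψ s, opCLM (H' s) (Ψ' s)⟫_ℂ).re : ℂ) := by
  -- Hermitian symmetry of `H t` on the interval
  have hA : ∀ t ∈ Set.Icc (0:ℝ) 1, ∀ x y : EuclideanSpace ℂ (Fin d),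
      ⟪opCLM (H t) x, y⟫_ℂ = ⟪x, opCLM (H t) y⟫_ℂ := by
    intro t ht x y
    have h := (Matrix.isHermitian_iff_isSymmetric.1 (hherm t ht)) x y
    simpa [opCLM, ← Matrix.coe_toEuclideanCLM_eq_toEuclideanLin] using h
  -- ⟪Ψ t, Ψ t⟫ = 1 on the interval
  have hnorm1 : ∀ t ∈ Set.Icc (0:ℝ) 1, ⟪Ψ t, Ψ t⟫_ℂ = 1 := by
    intro t ht
    rw [inner_self_eq_norm_sq_to_K, hΨnorm t ht]
    norm_num
  -- first derivative of the norm identity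
  have hn1 : ∀ t ∈ Set.Icc (0:ℝ) 1,
      ⟪Ψ t, Ψ' t⟫_ℂ + ⟪Ψ' t, Ψ t⟫_ℂ = 0 := by
    intro t ht
    have d1 : HasDerivAt (fun r => ⟪Ψ r, Ψ r⟫_ℂ)
        (⟪Ψ t, Ψ' t⟫_ℂ + ⟪Ψ' t, Ψ t⟫_ℂ) t :=
      HasDerivAt.inner ℂ (hΨd1 t ht) (hΨd1 t ht)
    exact derivIccUnique ht d1 (hasDerivAt_const t (1:ℂ)) hnorm1
  -- Hermitian symmetry of `H' t` on the interval
  have hA' : ∀ t ∈ Set.Icc (0:ℝ) 1, ∀ x y : EuclideanSpace ℂ (Fin d),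
      ⟪opCLM (H' t) x, y⟫_ℂ = ⟪x, opCLM (H' t) y⟫_ℂ := by
    intro t ht x y
    have dx : HasDerivAt (fun r => opCLM (H r) x) (opCLM (H' t) x) t := by
      simpa using hasDerivAt_clm_apply_complex (hHd1 t ht) (hasDerivAt_const t x)
    have dy : HasDerivAt (fun r => opCLM (H r) y) (opCLM (H' t) y) t := by
      simpa using hasDerivAt_clm_apply_complex (hHd1 t ht) (hasDerivAt_const t y)
    have e1 : HasDerivAt (fun r => ⟪opCLM (H r) x, y⟫_ℂ) ⟪opCLM (H' t) x, y⟫_ℂ t := by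
      simpa using HasDerivAt.inner ℂ dx (hasDerivAt_const t y)
    have e2 : HasDerivAt (fun r => ⟪x, opCLM (H r) y⟫_ℂ) ⟪x, opCLM (H' t) y⟫_ℂ t := by
      simpa using HasDerivAt.inner ℂ (hasDerivAt_const t x) dy
    exact derivIccUnique ht e1 e2 (fun r hr => hA r hr x y)
  -- derivative of the eigenvalue equation
  have heig' : ∀ t ∈ Set.Icc (0:ℝ) 1,
      opCLM (H' t) (Ψ t) + opCLM (H t) (Ψ' t)
        = (γ' t : ℂ) • Ψ t + (γ t : ℂ) • Ψ' t := by
    intro t ht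
    have dL : HasDerivAt (fun r => opCLM (H r) (Ψ r))
        (opCLM (H' t) (Ψ t) + opCLM (H t) (Ψ' t)) t :=
      hasDerivAt_clm_apply_complex (hHd1 t ht) (hΨd1 t ht)
    have dR : HasDerivAt (fun r => (γ r : ℂ) • Ψ r)
        ((γ' t : ℂ) • Ψ t + (γ t : ℂ) • Ψ' t) t := by
      have hc : HasDerivAt (fun r : ℝ => ((γ r : ℂ))) ((γ' t : ℝ) : ℂ) t :=
        (hγd1 t ht).ofReal_comp
      have h := hc.smul (hΨd1 t ht)
      have e : (γ' t : ℂ) • Ψ t + (γ t : ℂ) • Ψ' t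
          = (γ t : ℂ) • Ψ' t + (γ' t : ℂ) • Ψ t := add_comm _ _
      rw [e]
      exact h
    exact derivIccUnique ht dL dR heig
  -- first derivative formula for γ
  have hg1 : ∀ t ∈ Set.Icc (0:ℝ) 1,
      ((γ' t : ℝ) : ℂ) = ⟪Ψ t, opCLM (H' t) (Ψ t) + opCLM (H t) (Ψ' t)⟫_ℂ
        + ⟪Ψ' t, opCLM (H t) (Ψ t)⟫_ℂ := by
    intro t ht
    have dL : HasDerivAt (fun r : ℝ => ((γ r : ℝ) : ℂ)) ((γ' t : ℝ) : ℂ) t :=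
      (hγd1 t ht).ofReal_comp
    have dR : HasDerivAt (fun r => ⟪Ψ r, opCLM (H r) (Ψ r)⟫_ℂ)
        (⟪Ψ t, opCLM (H' t) (Ψ t) + opCLM (H t) (Ψ' t)⟫_ℂ
          + ⟪Ψ' t, opCLM (H t) (Ψ t)⟫_ℂ) t :=
      HasDerivAt.inner ℂ (hΨd1 t ht) (hasDerivAt_clm_apply_complex (hHd1 t ht) (hΨd1 t ht))
    refine derivIccUnique ht dL dR ?_
    intro r hr
    rw [heig r hr, inner_smul_right, hnorm1 r hr, mul_one]
  intro s hs
  -- second derivative of the norm identity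
  have hn2 : (⟪Ψ s, Ψ'' s⟫_ℂ + ⟪Ψ' s, Ψ' s⟫_ℂ)
      + (⟪Ψ' s, Ψ' s⟫_ℂ + ⟪Ψ'' s, Ψ s⟫_ℂ) = 0 := by
    have d1 : HasDerivAt (fun r => ⟪Ψ r, Ψ' r⟫_ℂ + ⟪Ψ' r, Ψ r⟫_ℂ)
        ((⟪Ψ s, Ψ'' s⟫_ℂ + ⟪Ψ' s, Ψ' s⟫_ℂ)
          + (⟪Ψ' s, Ψ' s⟫_ℂ + ⟪Ψ'' s, Ψ s⟫_ℂ)) s :=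
      (HasDerivAt.inner ℂ (hΨd1 s hs) (hΨd2 s hs)).add
        (HasDerivAt.inner ℂ (hΨd2 s hs) (hΨd1 s hs))
    exact derivIccUnique hs d1 (hasDerivAt_const s (0:ℂ)) hn1
  -- second derivative formula for γ
  have hg2 : ((γ'' s : ℝ) : ℂ)
      = (⟪Ψ s, (opCLM (H'' s) (Ψ s) + opCLM (H' s) (Ψ' s))
            + (opCLM (H' s) (Ψ' s) + opCLM (H s) (Ψ'' s))⟫_ℂ
          + ⟪Ψ' s, opCLM (H' s) (Ψ s) + opCLM (H s) (Ψ' s)⟫_ℂ)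
        + (⟪Ψ' s, opCLM (H' s) (Ψ s) + opCLM (H s) (Ψ' s)⟫_ℂ
          + ⟪Ψ'' s, opCLM (H s) (Ψ s)⟫_ℂ) := by
    have dL : HasDerivAt (fun r : ℝ => ((γ' r : ℝ) : ℂ)) ((γ'' s : ℝ) : ℂ) s :=
      (hγd2 s hs).ofReal_comp
    have dF : HasDerivAt (fun r => opCLM (H' r) (Ψ r) + opCLM (H r) (Ψ' r))
        ((opCLM (H'' s) (Ψ s) + opCLM (H' s) (Ψ' s))
          + (opCLM (H' s) (Ψ' s) + opCLM (H s) (Ψ'' s))) s :=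
      (hasDerivAt_clm_apply_complex (hHd2 s hs) (hΨd1 s hs)).add (hasDerivAt_clm_apply_complex (hHd1 s hs) (hΨd2 s hs))
    have dR : HasDerivAt (fun r => ⟪Ψ r, opCLM (H' r) (Ψ r) + opCLM (H r) (Ψ' r)⟫_ℂ
          + ⟪Ψ' r, opCLM (H r) (Ψ r)⟫_ℂ)
        ((⟪Ψ s, (opCLM (H'' s) (Ψ s) + opCLM (H' s) (Ψ' s))
            + (opCLM (H' s) (Ψ' s) + opCLM (H s) (Ψ'' s))⟫_ℂ
          + ⟪Ψ' s, opCLM (H' s) (Ψ s) + opCLM (H s) (Ψ' s)⟫_ℂ)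
        + (⟪Ψ' s, opCLM (H' s) (Ψ s) + opCLM (H s) (Ψ' s)⟫_ℂ
          + ⟪Ψ'' s, opCLM (H s) (Ψ s)⟫_ℂ)) s :=
      (HasDerivAt.inner ℂ (hΨd1 s hs) dF).add
        (HasDerivAt.inner ℂ (hΨd2 s hs) (hasDerivAt_clm_apply_complex (hHd1 s hs) (hΨd1 s hs)))
    exact derivIccUnique hs dL dR hg1
  -- notation
  set u := Ψ s with hu
  set u' := Ψ' s with hu'
  set u'' := Ψ'' s with hu''
  set c : ℂ := ((γ s : ℝ) : ℂ) with hc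
  set c' : ℂ := ((γ' s : ℝ) : ℂ) with hc'
  have F1 : opCLM (H s) u = c • u := heig s hs
  have F2 : opCLM (H s) u' = c' • u + c • u' - opCLM (H' s) u := by
    have := heig' s hs
    rw [eq_sub_iff_add_eq, add_comm]
    exact this
  set z : ℂ := ⟪u, opCLM (H' s) u'⟫_ℂ with hz
  -- ⟪u', A' u⟫ = conj z
  have hzb : ⟪u', opCLM (H' s) u⟫_ℂ = starRingEnd ℂ z := by
    rw [hz, ← inner_conj_symm, ← hA' s hs]
  -- ⟪u, A u''⟫ = c * ⟪u, u''⟫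
  have h3 : ⟪u, opCLM (H s) u''⟫_ℂ = c * ⟪u, u''⟫_ℂ := by
    rw [← hA s hs, F1, inner_smul_left, Complex.conj_ofReal]
  have h4 : ⟪u'', opCLM (H s) u⟫_ℂ = c * ⟪u'', u⟫_ℂ := by
    rw [F1, inner_smul_right]
  -- ⟪u', A u'⟫ in scalar form
  have hm : ⟪u', opCLM (H s) u'⟫_ℂ
      = c' * ⟪u', u⟫_ℂ + c * ⟪u', u'⟫_ℂ - starRingEnd ℂ z := by
    rw [F2, inner_sub_right, inner_add_right, inner_smul_right, inner_smul_right, hzb]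
  -- ⟪u', A u'⟫ is self-conjugate
  have hmreal : starRingEnd ℂ (⟪u', opCLM (H s) u'⟫_ℂ) = ⟪u', opCLM (H s) u'⟫_ℂ := by
    rw [inner_conj_symm, hA s hs]
  -- key relation: conj z = z + 2 c' ⟪u', u⟫
  have hR : starRingEnd ℂ z = z + 2 * c' * ⟪u', u⟫_ℂ := by
    have h5 : ⟪u, u'⟫_ℂ + ⟪u', u⟫_ℂ = 0 := hn1 s hs
    have := congrArg (starRingEnd ℂ) hm
    rw [hmreal, map_sub, map_add, map_mul, map_mul, Complex.conj_conj,
      inner_conj_symm, inner_conj_symm, hc', Complex.conj_ofReal, hc,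
      Complex.conj_ofReal] at this
    rw [hm] at this
    -- this : c' * ⟪u',u⟫ + c * ⟪u',u'⟫ - conj z = c' * ⟪u,u'⟫ + c * ⟪u',u'⟫ - z
    have h6 : ⟪u, u'⟫_ℂ = -⟪u', u⟫_ℂ := by linear_combination h5
    rw [h6] at this
    linear_combination -this
  -- final algebra
  rw [hg2]
  have h5 : (⟪u, u''⟫_ℂ + ⟪u', u'⟫_ℂ) + (⟪u', u'⟫_ℂ + ⟪u'', u⟫_ℂ) = 0 := hn2
  have h7 : (((z.re : ℝ)) : ℂ) * 2 = z + starRingEnd ℂ z := by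
    rw [Complex.add_conj]
    push_cast
    ring
  simp only [inner_add_right]
  rw [h3, h4, hm, hzb, ← hz]
  linear_combination c * h5 - h7 - hR
end

section
/- (Eigenvector derivative bound in the general eigenvalue case.) Let d ≥ 1, λ > 0, M₁ ≥ 0. Let H : ℝ → Matrix (Fin d) (Fin d) ℂ be differentiable on [0,1] with each H(s) Hermitian and ‖H'(s)‖ ≤ M₁ for all s ∈ [0,1]. Let Ψ : ℝ → EuclideanSpace ℂ (Fin d) be differentiable on [0,1] with ‖Ψ(s)‖ = 1 and ⟨Ψ'(s), Ψ(s)⟩ = 0 for all s ∈ [0,1], and let γ : ℝ → ℝ be differentiable on [0,1], such that H(s) Ψ(s) = γ(s) Ψ(s) for all s ∈ [0,1]. Assume that for every s ∈ [0,1] the eigenspace of H(s) for the eigenvalue γ(s) is one-dimensional (spanned by Ψ(s)) and every eigenvalue μ ≠ γ(s) of H(s) satisfies |μ − γ(s)| ≥ λ. Then for every s ∈ [0,1], ‖Ψ'(s)‖ ≤ 2·M₁/λ. -/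
open scoped InnerProductSpace

/-!
Differentiating `H Ψ = γ Ψ` gives `(H - γ) Ψ' = γ' Ψ - H' Ψ`. Pairing with `Ψ` (Hellmann–Feynman)
gives `γ' = ⟪Ψ, H' Ψ⟫`, so the right-hand side has norm at most `2 ‖H'‖`. Since `Ψ' ⊥ Ψ` and the
`γ`-eigenspace is spanned by `Ψ`, `Ψ'` is orthogonal to that eigenspace; expanding it in an
eigenbasis of `H`, the spectral gap gives `λ ‖Ψ'‖ ≤ ‖(H - γ) Ψ'‖`.
-/

open Module.End

theorem HasDerivAt.clm_apply_restrictScalars {𝕜 F G : Type*} [NontriviallyNormedField 𝕜]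
    [NormedAlgebra ℝ 𝕜] [NormedAddCommGroup F] [NormedSpace 𝕜 F] [NormedSpace ℝ F]
    [IsScalarTower ℝ 𝕜 F] [NormedAddCommGroup G] [NormedSpace 𝕜 G] [NormedSpace ℝ G]
    [IsScalarTower ℝ 𝕜 G] {c : ℝ → F →L[𝕜] G} {c' : F →L[𝕜] G} {u : ℝ → F} {u' : F} {x : ℝ}
    (hc : HasDerivAt c c' x) (hu : HasDerivAt u u' x) :
    HasDerivAt (fun y => c y (u y)) (c' (u x) + c x u') x :=
  ((ContinuousLinearMap.restrictScalarsL 𝕜 F G ℝ ℝ).hasFDerivAt.comp_hasDerivAt x hc).clm_apply hu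

variable {𝕜 E : Type*} [RCLike 𝕜] [NormedAddCommGroup E] [InnerProductSpace 𝕜 E]

theorem LinearMap.IsSymmetric.mul_norm_le_norm_sub_smul_of_gap [FiniteDimensional 𝕜 E]
    {T : E →ₗ[𝕜] E} (hT : T.IsSymmetric) {γ : 𝕜} {lam : ℝ} (hlam : 0 ≤ lam)
    (hgap : ∀ (μ : 𝕜) (v : E), v ≠ 0 → T v = μ • v → μ ≠ γ → lam ≤ ‖μ - γ‖)
    {v : E} (hv : v ∈ (eigenspace T γ)ᗮ) :
    lam * ‖v‖ ≤ ‖T v - γ • v‖ := by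
  set b := hT.eigenvectorBasis rfl
  set μ := hT.eigenvalues rfl
  have hcoord (i) : ⟪b i, T v - γ • v⟫_𝕜 = ((μ i : 𝕜) - γ) * ⟪b i, v⟫_𝕜 := by
    rw [inner_sub_right, inner_smul_right, ← hT, hT.apply_eigenvectorBasis, inner_smul_left,
      RCLike.conj_ofReal, sub_mul]
  have hcoord_le (i) : lam * ‖⟪b i, v⟫_𝕜‖ ≤ ‖⟪b i, T v - γ • v⟫_𝕜‖ := by
    rw [hcoord, norm_mul]
    by_cases hμ : (μ i : 𝕜) = γ
    · have hb : b i ∈ eigenspace T γ := hμ ▸ (hT.hasEigenvector_eigenvectorBasis rfl i).1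
      simp [Submodule.inner_right_of_mem_orthogonal hb hv]
    · exact mul_le_mul_of_nonneg_right (hgap _ _ (hT.hasEigenvector_eigenvectorBasis rfl i).2
        (hT.apply_eigenvectorBasis rfl i) hμ) (norm_nonneg _)
  have hsq : (lam * ‖v‖) ^ 2 ≤ ‖T v - γ • v‖ ^ 2 := by
    rw [mul_pow, ← b.sum_sq_norm_inner_right, ← b.sum_sq_norm_inner_right, Finset.mul_sum]
    gcongr with i
    rw [← mul_pow]
    exact pow_le_pow_left₀ (by positivity) (hcoord_le i) 2
  exact (sq_le_sq₀ (by positivity) (norm_nonneg _)).mp hsq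

section EigenDeriv

variable {T T' : E →L[𝕜] E} {ψ ψ' : E} {γ γ' : 𝕜}

theorem eigenvalue_deriv_eq_inner (hT : (T : E →ₗ[𝕜] E).IsSymmetric) (hψ : ‖ψ‖ = 1)
    (hψψ' : ⟪ψ, ψ'⟫_𝕜 = 0) (heig : T ψ = γ • ψ)
    (hderiv : T' ψ + T ψ' = γ' • ψ + γ • ψ') :
    γ' = ⟪ψ, T' ψ⟫_𝕜 := by
  have hTψ' : ⟪ψ, T ψ'⟫_𝕜 = 0 := by
    rw [← ContinuousLinearMap.coe_coe, ← hT, ContinuousLinearMap.coe_coe, heig, inner_smul_left,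
      hψψ', mul_zero]
  simpa [inner_add_right, inner_smul_right, hTψ', hψψ', hψ] using
    (congrArg (fun w => ⟪ψ, w⟫_𝕜) hderiv).symm

theorem norm_eigenvector_deriv_le_of_gap [FiniteDimensional 𝕜 E]
    (hT : (T : E →ₗ[𝕜] E).IsSymmetric) {lam : ℝ} (hlam : 0 < lam) (hψ : ‖ψ‖ = 1)
    (hψψ' : ⟪ψ, ψ'⟫_𝕜 = 0) (heig : T ψ = γ • ψ)
    (hderiv : T' ψ + T ψ' = γ' • ψ + γ • ψ')
    (hspace : eigenspace (T : E →ₗ[𝕜] E) γ ≤ 𝕜 ∙ ψ)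
    (hgap : ∀ (μ : 𝕜) (v : E), v ≠ 0 → T v = μ • v → μ ≠ γ → lam ≤ ‖μ - γ‖) :
    ‖ψ'‖ ≤ 2 * ‖T'‖ / lam := by
  have hperp : ψ' ∈ (eigenspace (T : E →ₗ[𝕜] E) γ)ᗮ :=
    Submodule.orthogonal_le hspace (Submodule.mem_orthogonal_singleton_iff_inner_right.mpr hψψ')
  have hT'ψ : ‖T' ψ‖ ≤ ‖T'‖ := by simpa [hψ] using T'.le_opNorm ψ
  have hγ' : ‖γ'‖ ≤ ‖T'‖ := by
    calc ‖γ'‖ = ‖⟪ψ, T' ψ⟫_𝕜‖ := by rw [eigenvalue_deriv_eq_inner hT hψ hψψ' heig hderiv]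
      _ ≤ ‖ψ‖ * ‖T' ψ‖ := norm_inner_le_norm _ _
      _ ≤ ‖T'‖ := by rwa [hψ, one_mul]
  have hrearr : T ψ' - γ • ψ' = γ' • ψ - T' ψ := by
    linear_combination (norm := module) hderiv
  rw [le_div_iff₀ hlam, mul_comm]
  calc lam * ‖ψ'‖ ≤ ‖T ψ' - γ • ψ'‖ := hT.mul_norm_le_norm_sub_smul_of_gap hlam.le hgap hperp
    _ = ‖γ' • ψ - T' ψ‖ := by rw [hrearr]
    _ ≤ ‖γ'‖ + ‖T'‖ := norm_sub_le_of_le (by rw [norm_smul, hψ, mul_one]) hT'ψ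
    _ ≤ 2 * ‖T'‖ := by linarith

end EigenDeriv

theorem eigenvector_deriv_bound_general_general {d : ℕ}
    (lam M₁ : ℝ) (hlam : 0 < lam)
    (H H' : ℝ → Matrix (Fin d) (Fin d) ℂ)
    (hHd : ∀ s ∈ Set.Icc (0:ℝ) 1, HasDerivAt (fun t => opCLM (H t)) (opCLM (H' s)) s)
    (hherm : ∀ s ∈ Set.Icc (0:ℝ) 1, (H s).IsHermitian)
    (hM₁b : ∀ s ∈ Set.Icc (0:ℝ) 1, ‖opCLM (H' s)‖ ≤ M₁)
    (Ψ Ψ' : ℝ → EuclideanSpace ℂ (Fin d))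
    (hΨd : ∀ s ∈ Set.Icc (0:ℝ) 1, HasDerivAt Ψ (Ψ' s) s)
    (hΨnorm : ∀ s ∈ Set.Icc (0:ℝ) 1, ‖Ψ s‖ = 1)
    (hphase : ∀ s ∈ Set.Icc (0:ℝ) 1, ⟪Ψ' s, Ψ s⟫_ℂ = 0)
    (γ γ' : ℝ → ℝ)
    (hγd : ∀ s ∈ Set.Icc (0:ℝ) 1, HasDerivAt γ (γ' s) s)
    (heig : ∀ s ∈ Set.Icc (0:ℝ) 1, opCLM (H s) (Ψ s) = (γ s : ℂ) • Ψ s)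
    (heigspace : ∀ s ∈ Set.Icc (0:ℝ) 1, ∀ v : EuclideanSpace ℂ (Fin d),
      opCLM (H s) v = (γ s : ℂ) • v → ∃ c : ℂ, v = c • Ψ s)
    (hgap : ∀ s ∈ Set.Icc (0:ℝ) 1, ∀ (μ : ℂ) (v : EuclideanSpace ℂ (Fin d)), v ≠ 0 →
      opCLM (H s) v = μ • v → μ ≠ (γ s : ℂ) → lam ≤ ‖μ - (γ s : ℂ)‖) :
    ∀ s ∈ Set.Icc (0:ℝ) 1, ‖Ψ' s‖ ≤ 2 * M₁ / lam := by
  intro s hs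
  have hsym : (opCLM (H s) : EuclideanSpace ℂ (Fin d) →ₗ[ℂ] _).IsSymmetric := by
    rw [opCLM, Matrix.coe_toEuclideanCLM_eq_toEuclideanLin]
    exact Matrix.isSymmetric_toEuclideanLin_iff.mpr (hherm s hs)
  have hψψ' : ⟪Ψ s, Ψ' s⟫_ℂ = 0 := by rw [← inner_conj_symm, hphase s hs, map_zero]
  have hderiv : opCLM (H' s) (Ψ s) + opCLM (H s) (Ψ' s)
      = (γ' s : ℂ) • Ψ s + (γ s : ℂ) • Ψ' s := by
    have hγΨ := ((hγd s hs).ofReal_comp.smul (hΨd s hs)).hasDerivWithinAt.congr heig (heig s hs)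
    rw [add_comm] at hγΨ
    exact (uniqueDiffOn_Icc one_pos s hs).eq_deriv _
      ((hHd s hs).clm_apply_restrictScalars (hΨd s hs)).hasDerivWithinAt hγΨ
  have hspace : eigenspace (opCLM (H s) : EuclideanSpace ℂ (Fin d) →ₗ[ℂ] _) (γ s) ≤ ℂ ∙ Ψ s := by
    intro v hv
    obtain ⟨c, rfl⟩ := heigspace s hs v (mem_eigenspace_iff.mp hv)
    exact Submodule.smul_mem _ c (Submodule.mem_span_singleton_self _)
  calc ‖Ψ' s‖ ≤ 2 * ‖opCLM (H' s)‖ / lam :=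
        norm_eigenvector_deriv_le_of_gap hsym hlam (hΨnorm s hs) hψψ' (heig s hs) hderiv hspace
          (hgap s hs)
    _ ≤ 2 * M₁ / lam := by gcongr; exact hM₁b s hs

/-- **Eigenvector derivative bound in the general eigenvalue case.** -/
theorem eigenvector_deriv_bound_general {d : ℕ} (hd : 1 ≤ d)
    (lam M₁ : ℝ) (hlam : 0 < lam) (hM₁ : 0 ≤ M₁)
    (H H' : ℝ → Matrix (Fin d) (Fin d) ℂ)
    (hHd : ∀ s ∈ Set.Icc (0:ℝ) 1, HasDerivAt (fun t => opCLM (H t)) (opCLM (H' s)) s)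
    (hherm : ∀ s ∈ Set.Icc (0:ℝ) 1, (H s).IsHermitian)
    (hM₁b : ∀ s ∈ Set.Icc (0:ℝ) 1, ‖opCLM (H' s)‖ ≤ M₁)
    (Ψ Ψ' : ℝ → EuclideanSpace ℂ (Fin d))
    (hΨd : ∀ s ∈ Set.Icc (0:ℝ) 1, HasDerivAt Ψ (Ψ' s) s)
    (hΨnorm : ∀ s ∈ Set.Icc (0:ℝ) 1, ‖Ψ s‖ = 1)
    (hphase : ∀ s ∈ Set.Icc (0:ℝ) 1, ⟪Ψ' s, Ψ s⟫_ℂ = 0)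
    (γ γ' : ℝ → ℝ)
    (hγd : ∀ s ∈ Set.Icc (0:ℝ) 1, HasDerivAt γ (γ' s) s)
    (heig : ∀ s ∈ Set.Icc (0:ℝ) 1, opCLM (H s) (Ψ s) = (γ s : ℂ) • Ψ s)
    (heigspace : ∀ s ∈ Set.Icc (0:ℝ) 1, ∀ v : EuclideanSpace ℂ (Fin d),
      opCLM (H s) v = (γ s : ℂ) • v → ∃ c : ℂ, v = c • Ψ s)
    (hgap : ∀ s ∈ Set.Icc (0:ℝ) 1, ∀ (μ : ℂ) (v : EuclideanSpace ℂ (Fin d)), v ≠ 0 →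
      opCLM (H s) v = μ • v → μ ≠ (γ s : ℂ) → lam ≤ ‖μ - (γ s : ℂ)‖) :
    ∀ s ∈ Set.Icc (0:ℝ) 1, ‖Ψ' s‖ ≤ 2 * M₁ / lam :=
  eigenvector_deriv_bound_general_general lam M₁ hlam H H' hHd hherm hM₁b Ψ Ψ' hΨd hΨnorm hphase γ
    γ' hγd heig heigspace hgap
end

section
/- (Cancellation in the operator geometric sum.) Let d ≥ 1, λ > 0, ε > 0, and let H be a Hermitian d × d complex matrix such that every nonzero eigenvalue μ of H satisfies |μ| ≥ λ, and such that ε·‖H‖ ≤ π. Let U = exp(i ε H) and let w ∈ ℂ^d be any vector orthogonal to the kernel of H. Then for every natural number Δ, ‖∑_{j=0}^{Δ−1} U^j w‖ ≤ (4/(ε λ))·‖w‖. -/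
open scoped InnerProductSpace

/-!
Diagonalise `H` in an orthonormal eigenbasis. There `U = exp (i ε H)` acts on the `k`-th
coordinate by `z = exp (i ε μₖ)`, so `∑_{j<Δ} Uʲ` acts by the scalar geometric sum
`(z^Δ - 1) / (z - 1)`, of modulus at most `2 / |z - 1| ≤ π / (ε |μₖ|)` by Jordan's inequality,
because `|ε μₖ| ≤ ε ‖H‖ ≤ π`. Coordinates with `μₖ = 0` vanish as `w ⊥ ker H`; the others are
multiplied by at most `π / (ε λ) ≤ 4 / (ε λ)`, and Parseval's identity gives the bound.
-/

open Real

section Eigenvector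
variable {𝕂 E : Type*} [RCLike 𝕂] [NormedAddCommGroup E] [NormedSpace 𝕂 E]

theorem norm_le_opNorm_of_apply_eq_smul {T : E →L[𝕂] E} {v : E} {μ : 𝕂} (hv : v ≠ 0)
    (h : T v = μ • v) : ‖μ‖ ≤ ‖T‖ := by
  have := T.le_opNorm v
  rw [h, norm_smul] at this
  exact le_of_mul_le_mul_right this (norm_pos_iff.mpr hv)

namespace ContinuousLinearMap

theorem pow_apply_of_apply_eq_smul {T : E →L[𝕂] E} {v : E} {μ : 𝕂}
    (h : T v = μ • v) (n : ℕ) : (T ^ n) v = μ ^ n • v := by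
  induction n with
  | zero => simp
  | succ n ih => rw [pow_succ', mul_apply_eq_comp, ih, map_smul, h, smul_smul, pow_succ]

theorem geom_sum_apply_of_apply_eq_smul {T : E →L[𝕂] E} {v : E} {μ : 𝕂}
    (h : T v = μ • v) (n : ℕ) :
    (∑ j ∈ Finset.range n, T ^ j) v = (∑ j ∈ Finset.range n, μ ^ j) • v := by
  rw [sum_apply, Finset.sum_smul]
  exact Finset.sum_congr rfl fun j _ => pow_apply_of_apply_eq_smul h j

theorem exp_apply_of_apply_eq_smul [CompleteSpace E] {T : E →L[𝕂] E}
    {v : E} {μ : 𝕂} (h : T v = μ • v) : NormedSpace.exp T v = NormedSpace.exp μ • v := by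
  have hT := (NormedSpace.exp_series_hasSum_exp' (𝕂 := 𝕂) T).mapL (apply 𝕂 E v)
  have hμ := (NormedSpace.exp_series_hasSum_exp' (𝕂 := 𝕂) μ).smul_const v
  refine hT.unique (hμ.congr_fun fun n => ?_)
  simp [pow_apply_of_apply_eq_smul h, smul_smul]

end ContinuousLinearMap

end Eigenvector

namespace OrthonormalBasis
variable {ι 𝕜 E : Type*} [Fintype ι] [RCLike 𝕜] [NormedAddCommGroup E] [InnerProductSpace 𝕜 E]
  (b : OrthonormalBasis ι 𝕜 E)

theorem inner_apply_of_apply_eq_smul {T : E →ₗ[𝕜] E} {a : ι → 𝕜}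
    (hT : ∀ i, T (b i) = a i • b i) (v : E) (i : ι) : ⟪b i, T v⟫_𝕜 = a i * ⟪b i, v⟫_𝕜 := by
  classical
  conv_lhs => rw [← b.sum_repr' v]
  simp [hT, inner_sum, inner_smul_right, b.inner_eq_ite, mul_comm]

theorem norm_le_of_norm_inner_le {v w : E} {K : ℝ} (hK : 0 ≤ K)
    (h : ∀ i, ‖⟪b i, v⟫_𝕜‖ ≤ K * ‖⟪b i, w⟫_𝕜‖) : ‖v‖ ≤ K * ‖w‖ := by
  refine (pow_le_pow_iff_left₀ (norm_nonneg v) (by positivity) two_ne_zero).mp ?_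
  rw [← b.sum_sq_norm_inner_right, mul_pow, ← b.sum_sq_norm_inner_right, Finset.mul_sum]
  gcongr with i
  rw [← mul_pow]
  exact pow_le_pow_left₀ (norm_nonneg _) (h i) 2

theorem norm_apply_le_of_apply_eq_smul {T : E →ₗ[𝕜] E} {a : ι → 𝕜}
    (hT : ∀ i, T (b i) = a i • b i) {v : E} {K : ℝ} (hK : 0 ≤ K)
    (ha : ∀ i, ⟪b i, v⟫_𝕜 ≠ 0 → ‖a i‖ ≤ K) : ‖T v‖ ≤ K * ‖v‖ :=
  b.norm_le_of_norm_inner_le hK fun i => by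
    rw [b.inner_apply_of_apply_eq_smul hT, norm_mul]
    by_cases hv : ⟪b i, v⟫_𝕜 = 0
    · simp [hv]
    · exact mul_le_mul_of_nonneg_right (ha i hv) (norm_nonneg _)

end OrthonormalBasis

theorem norm_geom_sum_le_of_norm_eq_one {z : ℂ} (hz : ‖z‖ = 1) (hz1 : z ≠ 1) (n : ℕ) :
    ‖∑ j ∈ Finset.range n, z ^ j‖ ≤ 2 / ‖z - 1‖ := by
  rw [geom_sum_eq hz1, norm_div]
  gcongr
  calc ‖z ^ n - 1‖ ≤ ‖z ^ n‖ + ‖(1 : ℂ)‖ := norm_sub_le _ _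
    _ = 2 := by rw [norm_pow, hz]; norm_num

theorem mul_abs_le_norm_exp_I_mul_ofReal_sub_one {x : ℝ} (hx : |x| ≤ π) :
    2 / π * |x| ≤ ‖Complex.exp (Complex.I * x) - 1‖ := by
  have hsin : |sin (x / 2)| = sin (|x| / 2) := by
    rw [abs_sin_eq_sin_abs_of_abs_le_pi (by rw [abs_div]; linarith [abs_nonneg x, pi_pos]),
      abs_div, abs_two]
  rw [Complex.norm_exp_I_mul_ofReal_sub_one, norm_mul, Real.norm_eq_abs, Real.norm_eq_abs, hsin,
    abs_two]
  have := mul_le_sin (x := |x| / 2) (by positivity) (by linarith)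
  linarith

theorem norm_geom_sum_exp_I_mul_le {x : ℝ} (hx0 : x ≠ 0) (hx : |x| ≤ π) (n : ℕ) :
    ‖∑ j ∈ Finset.range n, Complex.exp (Complex.I * x) ^ j‖ ≤ π / |x| := by
  have hlow := mul_abs_le_norm_exp_I_mul_ofReal_sub_one hx
  have hpos : 0 < 2 / π * |x| := by positivity
  have hz1 : Complex.exp (Complex.I * x) ≠ 1 := by
    intro h; rw [h, sub_self, norm_zero] at hlow; linarith
  calc _ ≤ 2 / ‖Complex.exp (Complex.I * x) - 1‖ :=
        norm_geom_sum_le_of_norm_eq_one (Complex.norm_exp_I_mul_ofReal x) hz1 n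
    _ ≤ 2 / (2 / π * |x|) := by gcongr
    _ = π / |x| := by field_simp

theorem isSymmetric_opCLM_s15 {d : ℕ} {H : Matrix (Fin d) (Fin d) ℂ} (hH : H.IsHermitian) :
    (opCLM H : EuclideanSpace ℂ (Fin d) →ₗ[ℂ] _).IsSymmetric := by
  rw [opCLM, Matrix.coe_toEuclideanCLM_eq_toEuclideanLin]
  exact Matrix.isSymmetric_toEuclideanLin_iff.mpr hH

theorem operator_geometric_sum_cancellation_general {d : ℕ}
    (lam ε : ℝ) (hlam : 0 < lam) (hε : 0 < ε)
    (H : Matrix (Fin d) (Fin d) ℂ) (hherm : H.IsHermitian)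
    (hgap : ∀ (μ : ℂ) (v : EuclideanSpace ℂ (Fin d)), v ≠ 0 →
      opCLM H v = μ • v → μ ≠ 0 → lam ≤ ‖μ‖)
    (hεH : ε * ‖opCLM H‖ ≤ Real.pi)
    (w : EuclideanSpace ℂ (Fin d))
    (hw : ∀ v : EuclideanSpace ℂ (Fin d), opCLM H v = 0 → ⟪v, w⟫_ℂ = 0)
    (Δ : ℕ) :
    ‖∑ j ∈ Finset.range Δ,
        (NormedSpace.exp ((Complex.I * (ε : ℂ)) • opCLM H) ^ j) w‖ ≤
      (4 / (ε * lam)) * ‖w‖ := by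
  have hsymm := isSymmetric_opCLM_s15 hherm
  have hd : Module.finrank ℂ (EuclideanSpace ℂ (Fin d)) = d := finrank_euclideanSpace_fin
  set b := hsymm.eigenvectorBasis hd
  set μ := hsymm.eigenvalues hd
  have hHb : ∀ i, opCLM H (b i) = (μ i : ℂ) • b i := hsymm.apply_eigenvectorBasis hd
  set U := NormedSpace.exp ((Complex.I * (ε : ℂ)) • opCLM H)
  have hUb : ∀ i, U (b i) = Complex.exp (Complex.I * ↑(ε * μ i)) • b i := fun i => by
    have hAb : ((Complex.I * (ε : ℂ)) • opCLM H) (b i) = (Complex.I * ↑(ε * μ i)) • b i := by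
      rw [smul_apply, hHb, smul_smul]
      congr 1
      push_cast
      ring
    rw [ContinuousLinearMap.exp_apply_of_apply_eq_smul hAb, ← Complex.exp_eq_exp_ℂ]
  rw [← sum_apply]
  refine b.norm_apply_le_of_apply_eq_smul (T := (∑ j ∈ Finset.range Δ, U ^ j : _ →L[ℂ] _))
    (fun i => U.geom_sum_apply_of_apply_eq_smul (hUb i) Δ) (by positivity) fun i hi => ?_
  have hμ : μ i ≠ 0 := fun h => hi (hw _ (by rw [hHb, h]; simp))
  have hμH : |μ i| ≤ ‖opCLM H‖ := by
    simpa using norm_le_opNorm_of_apply_eq_smul (b.orthonormal.ne_zero i) (hHb i)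
  have hlamμ : lam ≤ |μ i| := by
    simpa using hgap _ _ (b.orthonormal.ne_zero i) (hHb i) (by exact_mod_cast hμ)
  have hθ : |ε * μ i| ≤ π := by
    rw [abs_mul, abs_of_pos hε]
    exact (mul_le_mul_of_nonneg_left hμH hε.le).trans hεH
  have hεlam : ε * lam ≤ |ε * μ i| := by rw [abs_mul, abs_of_pos hε]; gcongr
  exact (norm_geom_sum_exp_I_mul_le (mul_ne_zero hε.ne' hμ) hθ Δ).trans
    (div_le_div₀ zero_le_four pi_le_four (by positivity) hεlam)

/-- **Cancellation in the operator geometric sum.** -/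
theorem operator_geometric_sum_cancellation {d : ℕ} (hd : 1 ≤ d)
    (lam ε : ℝ) (hlam : 0 < lam) (hε : 0 < ε)
    (H : Matrix (Fin d) (Fin d) ℂ) (hherm : H.IsHermitian)
    (hgap : ∀ (μ : ℂ) (v : EuclideanSpace ℂ (Fin d)), v ≠ 0 →
      opCLM H v = μ • v → μ ≠ 0 → lam ≤ ‖μ‖)
    (hεH : ε * ‖opCLM H‖ ≤ Real.pi)
    (w : EuclideanSpace ℂ (Fin d))
    (hw : ∀ v : EuclideanSpace ℂ (Fin d), opCLM H v = 0 → ⟪v, w⟫_ℂ = 0)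
    (Δ : ℕ) :
    ‖∑ j ∈ Finset.range Δ,
        (NormedSpace.exp ((Complex.I * (ε : ℂ)) • opCLM H) ^ j) w‖ ≤
      (4 / (ε * lam)) * ‖w‖ :=
  operator_geometric_sum_cancellation_general lam ε hlam hε H hherm hgap hεH w hw Δ
end
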